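/- Let T be a bounded operator on a complex Hilbert space H and let C > 0 satisfy ‖Σ_{j=0}^{N−1} (N−j) λ^j T^j‖ ≤ C·N² for every integer N ≥ 1 and every λ ∈ ℂ with |λ| = 1. Let 0 < M₁ < M₂ < N be integers and let x ∈ H with ‖x‖ = 1 and T^N x ≠ 0. Then Σ_{j=M₁}^{M₂−1} ‖T^{N−j} x‖²/‖T^N x‖² ≥ (M₂ − M₁)²/(16 C² M₂²). -/

import Mathlib

open Finset ComplexConjugate
open scoped InnerProductSpace InnerProduct

/-! With `u = T^N x`, duality gives `‖u‖² ≤ ‖T^(N-j) x‖ ‖T*^j u‖` for every `j ≤ N`, so by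
Cauchy–Schwarz `((M₂ - M₁) ‖u‖²)²` is at most `∑ ‖T^(N-j) x‖²` times `∑_{j<M₂} ‖T*^j u‖²`.
The Cesàro bound passes to `T*`, and averaging it over the `2M₂`-th roots of unity (discrete
Parseval) gives `∑_{j<2M₂} (2M₂ - j)² ‖T*^j u‖² ≤ (4 C M₂²)² ‖u‖²`; the weights exceed `M₂²`
for `j < M₂`, whence `∑_{j<M₂} ‖T*^j u‖² ≤ 16 C² M₂² ‖u‖²`. -/

noncomputable def cesaroPowSum {A : Type*} [Ring A] [Algebra ℂ A] (a : A) (N : ℕ) (z : ℂ) : A :=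
  ∑ j ∈ range N, (((N : ℂ) - j) * z ^ j) • a ^ j

/-- `cesaroPowSum a N z` is, up to a factor of order `N²`, the second Cesàro mean of `z • a`;
`a` is Kreiss bounded iff this bound holds for some `C`. -/
def IsCesaroBounded {A : Type*} [NormedRing A] [NormedAlgebra ℂ A] (a : A) (C : ℝ) : Prop :=
  ∀ N : ℕ, 1 ≤ N → ∀ z : ℂ, ‖z‖ = 1 → ‖cesaroPowSum a N z‖ ≤ C * (N : ℝ) ^ 2

lemma star_cesaroPowSum {A : Type*} [Ring A] [StarRing A] [Algebra ℂ A] [StarModule ℂ A]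
    (a : A) (N : ℕ) (z : ℂ) : star (cesaroPowSum a N z) = cesaroPowSum (star a) N (conj z) := by
  rw [cesaroPowSum, cesaroPowSum, star_sum]
  refine sum_congr rfl fun j _ => ?_
  rw [star_smul, star_pow, star_mul', star_sub, star_natCast, star_natCast, star_pow,
    Complex.star_def]

lemma IsCesaroBounded.star {A : Type*} [NormedRing A] [StarRing A] [NormedAlgebra ℂ A]
    [StarModule ℂ A] [NormedStarGroup A] {a : A} {C : ℝ} (h : IsCesaroBounded a C) :
    IsCesaroBounded (star a) C := fun N hN z hz => by
  have hbound := h N hN (conj z) (by rwa [Complex.norm_conj])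
  rwa [← norm_star, star_cesaroPowSum, Complex.conj_conj] at hbound

lemma IsPrimitiveRoot.sum_conj_pow_mul_pow {M : ℕ} {ω : ℂ} (hω : IsPrimitiveRoot ω M)
    {i j : ℕ} (hi : i < M) (hj : j < M) :
    ∑ k ∈ range M, conj ((ω ^ k) ^ i) * (ω ^ k) ^ j = if i = j then (M : ℂ) else 0 := by
  have hM : M ≠ 0 := by omega
  have hω0 : ω ≠ 0 := hω.ne_zero hM
  have hconj : conj ω = ω⁻¹ := (Complex.inv_eq_conj (hω.norm'_eq_one hM)).symm
  set ζ := (ω ^ i)⁻¹ * ω ^ j with hζ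
  have hterm : ∀ k, conj ((ω ^ k) ^ i) * (ω ^ k) ^ j = ζ ^ k := fun k => by
    rw [map_pow, map_pow, hconj]
    ring
  simp only [hterm]
  split_ifs with hij
  · subst hij
    simp [ζ, hω0]
  · have hζ1 : ζ ≠ 1 := by
      rw [Ne, hζ, inv_mul_eq_one₀ (pow_ne_zero _ hω0)]
      exact fun h => hij (hω.pow_inj hi hj h)
    have hζM : ζ ^ M = 1 := by
      rw [hζ, mul_pow, inv_pow, ← pow_mul, ← pow_mul, mul_comm i, mul_comm j, pow_mul, pow_mul,
        hω.pow_eq_one, one_pow, one_pow, inv_one, one_mul]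
    rw [geom_sum_eq hζ1, hζM, sub_self, zero_div]

lemma IsPrimitiveRoot.sum_norm_sum_pow_smul_sq {E : Type*} [NormedAddCommGroup E]
    [InnerProductSpace ℂ E] {M : ℕ} {ω : ℂ} (hω : IsPrimitiveRoot ω M) (a : ℕ → E) :
    ∑ k ∈ range M, ‖∑ j ∈ range M, (ω ^ k) ^ j • a j‖ ^ 2 = M * ∑ j ∈ range M, ‖a j‖ ^ 2 := by
  have hexpand : ∀ k, ⟪∑ j ∈ range M, (ω ^ k) ^ j • a j, ∑ j ∈ range M, (ω ^ k) ^ j • a j⟫_ℂ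
      = ∑ i ∈ range M, ∑ j ∈ range M, conj ((ω ^ k) ^ i) * (ω ^ k) ^ j * ⟪a i, a j⟫_ℂ := by
    intro k
    simp only [sum_inner, inner_sum, inner_smul_left, inner_smul_right, mul_sum, mul_assoc]
    rw [sum_comm]
    exact sum_congr rfl fun _ _ => sum_congr rfl fun _ _ => mul_left_comm _ _ _
  have hinner : ∑ k ∈ range M, ⟪∑ j ∈ range M, (ω ^ k) ^ j • a j,
      ∑ j ∈ range M, (ω ^ k) ^ j • a j⟫_ℂ = M * ∑ j ∈ range M, ⟪a j, a j⟫_ℂ := by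
    rw [sum_congr rfl fun k _ => hexpand k, sum_comm, mul_sum]
    refine sum_congr rfl fun i hi => ?_
    rw [sum_comm]
    simp only [← sum_mul]
    rw [sum_congr rfl fun j hj => by
      rw [hω.sum_conj_pow_mul_pow (mem_range.1 hi) (mem_range.1 hj)]]
    simp [hi]
  simp only [inner_self_eq_norm_sq_to_K] at hinner
  exact Complex.ofReal_injective (by push_cast; exact hinner)

lemma cesaroPowSum_apply {E : Type*} [NormedAddCommGroup E] [NormedSpace ℂ E] (A : E →L[ℂ] E)
    (N : ℕ) (z : ℂ) (v : E) :
    cesaroPowSum A N z v = ∑ j ∈ range N, z ^ j • (((N : ℂ) - j) • (A ^ j) v) := by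
  simp only [cesaroPowSum, _root_.sum_apply, smul_apply, smul_smul, mul_comm]

lemma sum_sq_mul_norm_pow_apply_sq_le {E : Type*} [NormedAddCommGroup E] [InnerProductSpace ℂ E]
    (A : E →L[ℂ] E) {M : ℕ} {K : ℝ} (hA : ∀ z : ℂ, ‖z‖ = 1 → ‖cesaroPowSum A M z‖ ≤ K) (v : E) :
    ∑ j ∈ range M, ((M : ℝ) - j) ^ 2 * ‖(A ^ j) v‖ ^ 2 ≤ K ^ 2 * ‖v‖ ^ 2 := by
  obtain rfl | hM := Nat.eq_zero_or_pos M
  · simp only [range_zero, sum_empty]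
    positivity
  have hω := Complex.isPrimitiveRoot_exp M hM.ne'
  set ω := Complex.exp (2 * Real.pi * Complex.I / M)
  set a : ℕ → E := fun j => ((M : ℂ) - j) • (A ^ j) v
  have hdft : ∀ k ∈ range M, ‖∑ j ∈ range M, (ω ^ k) ^ j • a j‖ ^ 2 ≤ (K * ‖v‖) ^ 2 := by
    intro k _
    rw [← cesaroPowSum_apply]
    have hz : ‖ω ^ k‖ = 1 := by rw [norm_pow, hω.norm'_eq_one hM.ne', one_pow]
    exact pow_le_pow_left₀ (norm_nonneg _)
      ((ContinuousLinearMap.le_opNorm _ _).trans (mul_le_mul_of_nonneg_right (hA _ hz) (norm_nonneg v))) 2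
  have hnorm : ∀ j ∈ range M, ‖a j‖ ^ 2 = ((M : ℝ) - j) ^ 2 * ‖(A ^ j) v‖ ^ 2 := by
    intro j _
    rw [norm_smul, mul_pow, ← Complex.ofReal_natCast, ← Complex.ofReal_natCast,
      ← Complex.ofReal_sub, Complex.norm_real, Real.norm_eq_abs, sq_abs]
  have hparseval := hω.sum_norm_sum_pow_smul_sq a
  rw [← sum_congr rfl hnorm, ← mul_le_mul_iff_right₀ (by positivity : (0 : ℝ) < M), ← hparseval]
  calc _ ≤ ∑ k ∈ range M, (K * ‖v‖) ^ 2 := sum_le_sum hdft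
    _ = M * (K ^ 2 * ‖v‖ ^ 2) := by rw [sum_const, card_range, nsmul_eq_mul, mul_pow]

lemma IsCesaroBounded.sum_norm_pow_apply_sq_le {E : Type*} [NormedAddCommGroup E]
    [InnerProductSpace ℂ E] {A : E →L[ℂ] E} {C : ℝ} (hA : IsCesaroBounded A C) (M : ℕ) (v : E) :
    ∑ j ∈ range M, ‖(A ^ j) v‖ ^ 2 ≤ 16 * C ^ 2 * M ^ 2 * ‖v‖ ^ 2 := by
  obtain rfl | hM := Nat.eq_zero_or_pos M
  · simp
  have hweighted := sum_sq_mul_norm_pow_apply_sq_le A (hA (2 * M) (by omega)) v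
  have hsub : (M : ℝ) ^ 2 * ∑ j ∈ range M, ‖(A ^ j) v‖ ^ 2
      ≤ ∑ j ∈ range (2 * M), (((2 * M : ℕ) : ℝ) - j) ^ 2 * ‖(A ^ j) v‖ ^ 2 := by
    rw [mul_sum]
    refine (sum_le_sum fun j hj => ?_).trans (sum_le_sum_of_subset_of_nonneg
      (range_subset_range.2 (by omega)) fun _ _ _ => by positivity)
    have hj : (j : ℝ) ≤ M := by exact_mod_cast (mem_range.1 hj).le
    gcongr
    push_cast
    linarith
  have hM' : (0 : ℝ) < (M : ℝ) ^ 2 := by positivity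
  refine le_of_mul_le_mul_left (hsub.trans (hweighted.trans_eq ?_)) hM'
  push_cast
  ring

lemma ContinuousLinearMap.norm_apply_sq_le_norm_mul_norm_adjoint_apply {𝕜 E F : Type*}
    [RCLike 𝕜] [NormedAddCommGroup E] [InnerProductSpace 𝕜 E] [CompleteSpace E]
    [NormedAddCommGroup F] [InnerProductSpace 𝕜 F] [CompleteSpace F] (A : E →L[𝕜] F) (y : E) :
    ‖A y‖ ^ 2 ≤ ‖y‖ * ‖(A†) (A y)‖ := by
  calc ‖A y‖ ^ 2 = ‖⟪y, (A†) (A y)⟫_𝕜‖ := by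
        rw [adjoint_inner_right, inner_self_eq_norm_sq_to_K, ← RCLike.ofReal_pow,
          RCLike.norm_ofReal, abs_sq]
    _ ≤ ‖y‖ * ‖(A†) (A y)‖ := norm_inner_le_norm _ _

lemma sq_card_mul_le_sum_sq_mul_sum_sq {ι : Type*} {s : Finset ι} {f g : ι → ℝ} {c : ℝ}
    (hc : 0 ≤ c) (h : ∀ i ∈ s, c ≤ f i * g i) :
    (#s * c) ^ 2 ≤ (∑ i ∈ s, f i ^ 2) * ∑ i ∈ s, g i ^ 2 := by
  have hsum : #s * c ≤ ∑ i ∈ s, f i * g i := by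
    simpa [sum_const, nsmul_eq_mul] using sum_le_sum h
  exact (pow_le_pow_left₀ (by positivity) hsum 2).trans (sum_mul_sq_le_sq_mul_sq s f g)

theorem stmt_10_general {H : Type*} [NormedAddCommGroup H] [InnerProductSpace ℂ H] [CompleteSpace H]
    (T : H →L[ℂ] H) (C : ℝ)
    (hT : ∀ N : ℕ, 1 ≤ N → ∀ z : ℂ, ‖z‖ = 1 →
      ‖∑ j ∈ Finset.range N, (((N : ℂ) - (j : ℂ)) * z ^ j) • T ^ j‖ ≤ C * (N : ℝ) ^ 2)
    (M₁ M₂ N : ℕ) (hM₁₂ : M₁ < M₂) (hM₂N : M₂ < N)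
    (x : H) (hTN : (T ^ N) x ≠ 0) :
    ((M₂ : ℝ) - (M₁ : ℝ)) ^ 2 / (16 * C ^ 2 * (M₂ : ℝ) ^ 2) ≤
      ∑ j ∈ Finset.Ico M₁ M₂, ‖(T ^ (N - j)) x‖ ^ 2 / ‖(T ^ N) x‖ ^ 2 := by
  set u := (T ^ N) x
  have hu : 0 < ‖u‖ ^ 2 := pow_pos (norm_pos_iff.2 hTN) 2
  have hdual : ∀ j ∈ Ico M₁ M₂, ‖u‖ ^ 2 ≤ ‖(T ^ (N - j)) x‖ * ‖(star T ^ j) u‖ := by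
    intro j hj
    have hjN : j ≤ N := by grind
    have key := (T ^ j).norm_apply_sq_le_norm_mul_norm_adjoint_apply ((T ^ (N - j)) x)
    rwa [← ContinuousLinearMap.star_eq_adjoint, star_pow, ← mul_apply_eq_comp, ← pow_add,
      Nat.add_sub_cancel' hjN] at key
  have hCS := sq_card_mul_le_sum_sq_mul_sum_sq hu.le hdual
  have hadj : ∑ j ∈ Ico M₁ M₂, ‖(star T ^ j) u‖ ^ 2 ≤ 16 * C ^ 2 * M₂ ^ 2 * ‖u‖ ^ 2 :=
    (sum_le_sum_of_subset_of_nonneg (fun j hj => mem_range.2 (mem_Ico.1 hj).2) fun _ _ _ => by positivity).trans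
      ((IsCesaroBounded.star hT).sum_norm_pow_apply_sq_le M₂ u)
  rw [Nat.card_Ico, Nat.cast_sub hM₁₂.le] at hCS
  set S := ∑ j ∈ Ico M₁ M₂, ‖(T ^ (N - j)) x‖ ^ 2
  have hS : 0 ≤ S := sum_nonneg fun _ _ => by positivity
  have key : ‖u‖ ^ 2 * (((M₂ : ℝ) - M₁) ^ 2 * ‖u‖ ^ 2) ≤ ‖u‖ ^ 2 * (S * (16 * C ^ 2 * M₂ ^ 2)) :=
    calc _ = (((M₂ : ℝ) - M₁) * ‖u‖ ^ 2) ^ 2 := by ring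
      _ ≤ S * ∑ j ∈ Ico M₁ M₂, ‖(star T ^ j) u‖ ^ 2 := hCS
      _ ≤ S * (16 * C ^ 2 * M₂ ^ 2 * ‖u‖ ^ 2) := by gcongr
      _ = _ := by ring
  rw [← sum_div, le_div_iff₀ hu, div_mul_eq_mul_div]
  exact div_le_of_le_mul₀ (by positivity) hS (le_of_mul_le_mul_left key hu)

/-- If `‖∑_{j<N} (N-j) λ^j T^j‖ ≤ C N²` for all `N ≥ 1` and unimodular `λ`, then for integers
`0 < M₁ < M₂ < N` and a unit vector `x` with `T^N x ≠ 0`,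
`∑_{M₁ ≤ j < M₂} ‖T^{N-j} x‖² / ‖T^N x‖² ≥ (M₂ - M₁)² / (16 C² M₂²)`. -/
theorem stmt_10 {H : Type*} [NormedAddCommGroup H] [InnerProductSpace ℂ H] [CompleteSpace H]
    (T : H →L[ℂ] H) (C : ℝ) (hC : 0 < C)
    (hT : ∀ N : ℕ, 1 ≤ N → ∀ z : ℂ, ‖z‖ = 1 →
      ‖∑ j ∈ Finset.range N, (((N : ℂ) - (j : ℂ)) * z ^ j) • T ^ j‖ ≤ C * (N : ℝ) ^ 2)
    (M₁ M₂ N : ℕ) (hM₁ : 0 < M₁) (hM₁₂ : M₁ < M₂) (hM₂N : M₂ < N)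
    (x : H) (hx : ‖x‖ = 1) (hTN : (T ^ N) x ≠ 0) :
    ((M₂ : ℝ) - (M₁ : ℝ)) ^ 2 / (16 * C ^ 2 * (M₂ : ℝ) ^ 2) ≤
      ∑ j ∈ Finset.Ico M₁ M₂, ‖(T ^ (N - j)) x‖ ^ 2 / ‖(T ^ N) x‖ ^ 2 :=
  stmt_10_general T C hT M₁ M₂ N hM₁₂ hM₂N x hTN
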